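/- Let d, k, t, ℓ be integers with 1 ≤ k ≤ d, t ≥ 1 and 0 ≤ ℓ ≤ k. Let u_0, …, u_{g−1} be a repair-group configuration for (k,t), and let l_0, …, l_{g−1} be integers with 0 ≤ l_i ≤ u_i for all i and Σ_{i=0}^{g−1} l_i = ℓ. Then, with the MBCR normalization β = 2, β' = 1, α = 2d + t − 1, the eavesdropper-discounted cut-set value satisfies Σ_{i=0}^{g−1} (u_i − l_i) · min( 2d + t − 1 , 2(d − s_i) + (t − u_i) ) ≥ (k − ℓ)(2d + t − k − ℓ). This is the arithmetic core of Proposition 1: every cooperative regenerating code at the MBCR point with secure file size M^s against ℓ storage-observing eavesdroppers satisfies M^s ≤ (k − ℓ)(2d + t − k − ℓ). -/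

import Mathlib

/-!
Since `u i ≥ 1` and the prefix sums `s i` are nonnegative, the minimum is always attained by
its second argument, so the cut value is `(2d + t)(k - L) - ∑ (u i - l i)(2 s i + u i)`.
Because `u i (2 s i + u i) = s (i+1)² - s i²` telescopes to `k²`, and likewise for `l` to `L²`,
it suffices that `∑ (u i - l i)(2 s i + u i) ≤ k² - L²`, which holds termwise because the
prefix sums of `l` are dominated by those of `u`.
-/

open Finset

variable {ι R : Type*} [LinearOrder ι]

theorem Finset.sq_sum_eq_sum_mul_two_mul_sum_lt_add [CommSemiring R] (s : Finset ι)
    (u : ι → R) : (∑ i ∈ s, u i) ^ 2 = ∑ i ∈ s, u i * (2 * ∑ j ∈ s with j < i, u j + u i) := by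
  classical
  induction s using Finset.induction_on_max with
  | empty => simp
  | insert a s hlt ih =>
    have ha : a ∉ s := fun h => lt_irrefl a (hlt a h)
    have hrest : ∑ i ∈ s, u i * (2 * ∑ j ∈ insert a s with j < i, u j + u i) =
        ∑ i ∈ s, u i * (2 * ∑ j ∈ s with j < i, u j + u i) :=
      sum_congr rfl fun i hi => by rw [filter_insert, if_neg (not_lt.2 (hlt i hi).le)]
    rw [sum_insert ha, sum_insert ha, filter_insert, if_neg (lt_irrefl a),
      filter_true_of_mem hlt, hrest, ← ih]
    ring

variable [CommRing R] [LinearOrder R] [IsStrictOrderedRing R]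

theorem Finset.sum_sub_mul_two_mul_sum_lt_add_le_sq_sub_sq (s : Finset ι) (u l : ι → R)
    (hl : ∀ i ∈ s, 0 ≤ l i ∧ l i ≤ u i) :
    ∑ i ∈ s, (u i - l i) * (2 * ∑ j ∈ s with j < i, u j + u i) ≤
      (∑ i ∈ s, u i) ^ 2 - (∑ i ∈ s, l i) ^ 2 := by
  rw [sq_sum_eq_sum_mul_two_mul_sum_lt_add, sq_sum_eq_sum_mul_two_mul_sum_lt_add,
    ← sum_sub_distrib]
  refine sum_le_sum fun i hi => ?_
  have hprefix : ∑ j ∈ s with j < i, l j ≤ ∑ j ∈ s with j < i, u j :=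
    sum_le_sum fun j hj => (hl j (mem_filter.1 hj).1).2
  have hterm : l i * (2 * ∑ j ∈ s with j < i, l j + l i) ≤
      l i * (2 * ∑ j ∈ s with j < i, u j + u i) :=
    mul_le_mul_of_nonneg_left (by linarith [(hl i hi).2]) (hl i hi).1
  linarith

theorem mbcr_secure_cutset_lower_bound_general (d k t L : ℤ)
    (g : ℕ) (u l : Fin g → ℤ)
    (hu : ∀ i, 1 ≤ u i ∧ u i ≤ t)
    (husum : ∑ i, u i = k)
    (hl : ∀ i, 0 ≤ l i ∧ l i ≤ u i)
    (hlsum : ∑ i, l i = L) :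
    (k - L) * (2 * d + t - k - L) ≤
      ∑ i : Fin g, (u i - l i) *
        min (2 * d + t - 1)
          (2 * (d - ∑ j : Fin g, if (j : ℕ) < (i : ℕ) then u j else 0) + (t - u i)) := by
  set s : Fin g → ℤ := fun i => ∑ j with j < i, u j
  have hs : ∀ i : Fin g, (∑ j : Fin g, if (j : ℕ) < (i : ℕ) then u j else 0) = s i :=
    fun i => (sum_filter _ _).symm
  have hmin : ∀ i : Fin g, min (2 * d + t - 1) (2 * (d - s i) + (t - u i)) =
      2 * d + t - (2 * s i + u i) := fun i => by
    have : 0 ≤ s i := sum_nonneg fun j _ => zero_le_one.trans (hu j).1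
    rw [min_eq_right (by linarith [(hu i).1])]
    ring
  have key := sum_sub_mul_two_mul_sum_lt_add_le_sq_sub_sq univ u l fun i _ => hl i
  rw [husum, hlsum] at key
  simp only [hs, hmin]
  calc (k - L) * (2 * d + t - k - L) = (2 * d + t) * (k - L) - (k ^ 2 - L ^ 2) := by ring
    _ ≤ (2 * d + t) * ∑ i : Fin g, (u i - l i) - ∑ i : Fin g, (u i - l i) * (2 * s i + u i) := by
      rw [sum_sub_distrib, husum, hlsum]; linarith
    _ = ∑ i : Fin g, (u i - l i) * (2 * d + t - (2 * s i + u i)) := by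
      rw [mul_sum, ← sum_sub_distrib]; exact sum_congr rfl fun i _ => by ring

/-- At the MBCR point (`β = 2`, `β' = 1`, `α = 2d + t - 1`), the eavesdropper-discounted
cut-set value of every repair-group configuration `u₀, …, u_{g-1}` for `(k, t)` with
eavesdropper allocation `l₀, …, l_{g-1}` summing to `L` is at least
`(k - L) (2d + t - k - L)`. -/
theorem mbcr_secure_cutset_lower_bound (d k t L : ℤ) (hk : 1 ≤ k) (hkd : k ≤ d) (ht : 1 ≤ t)
    (hL0 : 0 ≤ L) (hLk : L ≤ k)
    (g : ℕ) (u l : Fin g → ℤ)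
    (hu : ∀ i, 1 ≤ u i ∧ u i ≤ t)
    (husum : ∑ i, u i = k)
    (hl : ∀ i, 0 ≤ l i ∧ l i ≤ u i)
    (hlsum : ∑ i, l i = L) :
    (k - L) * (2 * d + t - k - L) ≤
      ∑ i : Fin g, (u i - l i) *
        min (2 * d + t - 1)
          (2 * (d - ∑ j : Fin g, if (j : ℕ) < (i : ℕ) then u j else 0) + (t - u i)) :=
  mbcr_secure_cutset_lower_bound_general d k t L g u l hu husum hl hlsum
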